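/- Let w be a nonempty string over a finite alphabet Σ, let q and p be integers with q > |w| and p ≥ 1, let P be a string over Σ with |P| = q, and let t = w·pre(w^{p−1}, q−1). Then |Occ(w^p, P)| = Σ_{j ∈ Occ(t, P)} |{ m ∈ ℕ : j + m·|w| + q − 1 ≤ p·|w| }|. -/

import Mathlib

/-- `Occ T P` is the set of (1-based) occurrence positions of `P` in `T`:
`{ i : 1 ≤ i ≤ |T|−|P|+1 and T[i:i+|P|−1] = P }`. -/
def Occ {α : Type*} [DecidableEq α] (T P : List α) : Finset ℕ :=
  (Finset.Icc 1 (T.length - P.length + 1)).filter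
    (fun i => (T.drop (i - 1)).take P.length = P)

/-- `pre T k = T[1:min(k,|T|)]`, the prefix of `T` of length at most `k`. -/
def pre {α : Type*} (T : List α) (k : ℕ) : List α := T.take k

/-- `suf T k = T[|T|−min(k,|T|)+1:|T|]`, the suffix of `T` of length at most `k`. -/
def suf {α : Type*} (T : List α) (k : ℕ) : List α := T.drop (T.length - k)

/-- `listPow w p` is the `p`-fold concatenation `w^p`. -/
def listPow {α : Type*} (w : List α) : ℕ → List α
  | 0 => []
  | p + 1 => w ++ listPow w p

/-!
Every position of `w^p` is `j + m·|w|` with `1 ≤ j ≤ |w|` and `m ≥ 0`, and since `w^p` has period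
`|w|`, the `q`-gram starting there is the one starting at `j`, as long as it fits into `w^p`.
So the occurrences of `P` in `w^p` are the `j + m·|w|` with `j` an occurrence of `P` starting in
the first copy of `w` and `j + m·|w| + q − 1 ≤ p·|w|`. The occurrences starting in the first copy
of `w` are exactly the occurrences in the prefix `t` of `w^p` of length `|w| + q − 1`.
-/

section Occ

variable {α : Type*} [DecidableEq α] {T P : List α}

theorem mem_Occ_iff (hP : P ≠ []) {i : ℕ} :
    i ∈ Occ T P ↔ 1 ≤ i ∧ (T.drop (i - 1)).take P.length = P := by
  have hP := List.length_pos_iff.mpr hP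
  simp only [Occ, Finset.mem_filter, Finset.mem_Icc]
  constructor
  · rintro ⟨⟨hi, -⟩, h⟩
    exact ⟨hi, h⟩
  · rintro ⟨hi, h⟩
    have hlen := congrArg List.length h
    simp only [List.length_take, List.length_drop] at hlen
    exact ⟨⟨hi, by omega⟩, h⟩

theorem zero_notMem_Occ : 0 ∉ Occ T P := by
  simp [Occ]

theorem one_le_of_mem_Occ {i : ℕ} (h : i ∈ Occ T P) : 1 ≤ i :=
  (Finset.mem_Icc.1 (Finset.mem_filter.1 h).1).1

theorem le_length_of_mem_Occ {i : ℕ} (h : i ∈ Occ T P) : i - 1 + P.length ≤ T.length := by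
  simp only [Occ, Finset.mem_filter, Finset.mem_Icc] at h
  have hlen := congrArg List.length h.2
  simp only [List.length_take, List.length_drop] at hlen
  omega

theorem mem_Occ_take_iff (hP : P ≠ []) {j k : ℕ} :
    j ∈ Occ (T.take k) P ↔ j ∈ Occ T P ∧ j - 1 + P.length ≤ k := by
  rw [mem_Occ_iff hP, mem_Occ_iff hP, List.drop_take, List.take_take]
  by_cases h : j - 1 + P.length ≤ k
  · rw [min_eq_left (by omega)]
    tauto
  · have hlen : (((T.drop (j - 1)).take (min P.length (k - (j - 1))))).length ≠ P.length := by
      have := List.length_pos_iff.mpr hP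
      simp only [List.length_take]
      omega
    exact ⟨fun ⟨_, h'⟩ => absurd (congrArg List.length h') hlen, fun ⟨_, h'⟩ => absurd h' h⟩

theorem mem_Occ_take_add_iff (hP : P ≠ []) {j n : ℕ} :
    j ∈ Occ (T.take (n + (P.length - 1))) P ↔ j ∈ Occ T P ∧ j ≤ n := by
  have := List.length_pos_iff.mpr hP
  rw [mem_Occ_take_iff hP]
  constructor <;> rintro ⟨hj, hle⟩ <;> exact ⟨hj, by have := one_le_of_mem_Occ hj; omega⟩

end Occ

section listPow

variable {α : Type*} (w : List α)

theorem listPow_length (p : ℕ) : (listPow w p).length = p * w.length := by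
  induction p with
  | zero => simp [listPow]
  | succ p ih => simp [listPow, ih]; ring

theorem listPow_add (a b : ℕ) : listPow w (a + b) = listPow w a ++ listPow w b := by
  induction a with
  | zero => simp [listPow]
  | succ a ih => simp [listPow, Nat.succ_add, ih]

theorem listPow_one : listPow w 1 = w := by
  simp [listPow]

theorem take_drop_listPow_add_mul {p m i q : ℕ} (hm : m ≤ p)
    (h : i + m * w.length + q ≤ p * w.length) :
    ((listPow w p).drop (i + m * w.length)).take q = ((listPow w p).drop i).take q := by
  obtain ⟨k, rfl⟩ := Nat.exists_eq_add_of_le hm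
  have hk : i + q ≤ (listPow w k).length := by
    rw [listPow_length]
    nlinarith
  calc ((listPow w (m + k)).drop (i + m * w.length)).take q
      = ((listPow w k).drop i).take q := by
        rw [listPow_add, ← listPow_length w m, Nat.add_comm, ← List.drop_drop, List.drop_left]
    _ = ((listPow w (m + k)).drop i).take q := by
        rw [Nat.add_comm m, listPow_add, List.take_drop, List.take_drop,
          List.take_append_of_le_length hk]

theorem append_pre_listPow_eq_take {p : ℕ} (hp : 1 ≤ p) (k : ℕ) :
    w ++ pre (listPow w (p - 1)) k = (listPow w p).take (w.length + k) := by
  obtain ⟨p, rfl⟩ := Nat.exists_eq_add_of_le hp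
  rw [listPow_add, listPow_one, List.take_append, List.take_of_length_le (by omega),
    Nat.add_sub_cancel_left, Nat.add_sub_cancel_left, pre]

theorem mem_Occ_listPow_add_mul [DecidableEq α] {P : List α} (hw : w ≠ []) (hP : P ≠ [])
    {p j m : ℕ} (hj : 1 ≤ j) :
    j + m * w.length ∈ Occ (listPow w p) P ↔
      j ∈ Occ (listPow w p) P ∧ j + m * w.length + P.length - 1 ≤ p * w.length := by
  have hn := List.length_pos_iff.mpr hw
  have hshift : j + m * w.length - 1 = j - 1 + m * w.length := by omega
  have hm_of_le (hlen : j - 1 + m * w.length + P.length ≤ p * w.length) : m ≤ p :=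
    Nat.le_of_mul_le_mul_right (by omega) hn
  constructor
  · intro hocc
    have hlen := le_length_of_mem_Occ hocc
    rw [listPow_length, hshift] at hlen
    rw [mem_Occ_iff hP, hshift, take_drop_listPow_add_mul w (hm_of_le hlen) hlen] at hocc
    exact ⟨(mem_Occ_iff hP).2 ⟨hj, hocc.2⟩, by omega⟩
  · rintro ⟨hocc, hlen⟩
    replace hlen : j - 1 + m * w.length + P.length ≤ p * w.length := by omega
    rw [mem_Occ_iff hP] at hocc ⊢
    rw [hshift, take_drop_listPow_add_mul w (hm_of_le hlen) hlen]
    exact ⟨by omega, hocc.2⟩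

end listPow

theorem Finset.card_eq_sum_ncard_add_mul (S : Finset ℕ) (hS : 0 ∉ S) {n : ℕ} (hn : 0 < n) :
    S.card = ∑ j ∈ Finset.Icc 1 n, {m : ℕ | j + m * n ∈ S}.ncard := by
  have hmaps : ∀ i ∈ S, (i - 1) % n + 1 ∈ Finset.Icc 1 n := fun i _ => by
    have := Nat.mod_lt (i - 1) hn
    simp only [Finset.mem_Icc]
    omega
  rw [Finset.card_eq_sum_card_fiberwise hmaps]
  refine Finset.sum_congr rfl fun j hj => ?_
  rw [Finset.mem_Icc] at hj
  rw [← Set.ncard_coe_finset]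
  symm
  refine Set.ncard_congr (fun m _ => j + m * n) (fun m hm => ?_) (fun a b _ _ hab => ?_) ?_
  · have hmod : (j + m * n - 1) % n = j - 1 := by
      rw [show j + m * n - 1 = j - 1 + m * n by omega, Nat.add_mul_mod_self_right,
        Nat.mod_eq_of_lt (by omega)]
    simp only [Finset.coe_filter, Set.mem_ofPred_eq]
    exact ⟨hm, by omega⟩
  · simpa [hn.ne'] using hab
  · intro i hi
    simp only [Finset.coe_filter, Set.mem_ofPred_eq] at hi
    have hi1 : i ≠ 0 := fun h => hS (h ▸ hi.1)
    have hdiv := Nat.div_add_mod (i - 1) n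
    rw [Nat.mul_comm] at hdiv
    have hi_eq : j + (i - 1) / n * n = i := by omega
    exact ⟨(i - 1) / n, by simpa only [Set.mem_ofPred_eq, hi_eq] using hi.1, hi_eq⟩

theorem qgram_count_pow_short_period_general {α : Type*} [DecidableEq α]
    (w : List α) (hw : w ≠ []) (q p : ℕ) (hq : w.length < q) (hp : 1 ≤ p)
    (P : List α) (hP : P.length = q) :
    (Occ (listPow w p) P).card =
      ∑ j ∈ Occ (w ++ pre (listPow w (p - 1)) (q - 1)) P,
        {m : ℕ | j + m * w.length + q - 1 ≤ p * w.length}.ncard := by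
  subst hP
  have hn : 0 < w.length := List.length_pos_iff.mpr hw
  have hP : P ≠ [] := List.ne_nil_of_length_pos (by omega)
  rw [append_pre_listPow_eq_take w hp,
    (Occ (listPow w p) P).card_eq_sum_ncard_add_mul zero_notMem_Occ hn]
  symm
  calc _ = ∑ j ∈ Occ ((listPow w p).take (w.length + (P.length - 1))) P,
        {m : ℕ | j + m * w.length ∈ Occ (listPow w p) P}.ncard := by
        refine Finset.sum_congr rfl fun j hj => ?_
        obtain ⟨hjT, -⟩ := (mem_Occ_take_add_iff hP).1 hj
        simp only [mem_Occ_listPow_add_mul w hw hP (one_le_of_mem_Occ hjT), hjT, true_and]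
    _ = _ := by
        refine Finset.sum_subset (fun j hj => ?_) (fun j hj hjt => ?_)
        · obtain ⟨hjT, hjn⟩ := (mem_Occ_take_add_iff hP).1 hj
          exact Finset.mem_Icc.2 ⟨one_le_of_mem_Occ hjT, hjn⟩
        · rw [Finset.mem_Icc] at hj
          convert Set.ncard_empty ℕ
          refine Set.eq_empty_of_forall_notMem fun m hm => hjt ?_
          exact (mem_Occ_take_add_iff hP).2
            ⟨((mem_Occ_listPow_add_mul w hw hP hj.1).1 hm).1, hj.2⟩

/-- for `q > |w|`, `p ≥ 1` and `t = w·pre(w^{p−1}, q−1)`,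
`|Occ(w^p,P)| = Σ_{j ∈ Occ(t,P)} |{ m ∈ ℕ : j + m·|w| + q − 1 ≤ p·|w| }|`. -/
theorem qgram_count_pow_short_period {α : Type*} [Fintype α] [DecidableEq α]
    (w : List α) (hw : w ≠ []) (q p : ℕ) (hq : w.length < q) (hp : 1 ≤ p)
    (P : List α) (hP : P.length = q) :
    (Occ (listPow w p) P).card =
      ∑ j ∈ Occ (w ++ pre (listPow w (p - 1)) (q - 1)) P,
        {m : ℕ | j + m * w.length + q - 1 ≤ p * w.length}.ncard :=
  qgram_count_pow_short_period_general w hw q p hq hp P hP
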